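/- For all n ≥ 0, ∑_{k=0}^n C(n,k) c_k c_{n-k} = ∑_{k=0}^n s(n,k)·S(k+2,2)/C(k+2,2), where (c_n) are the Cauchy numbers. -/

import Mathlib

open Finset

/-- Falling factorial `(θ)_n = θ(θ-1)⋯(θ-n+1)`. -/
noncomputable def fallFac (θ : ℝ) (n : ℕ) : ℝ := ∏ i ∈ Finset.range n, (θ - i)

/-- Cauchy numbers `c n = ∫_0^1 (θ)_n dθ`. -/
noncomputable def cauchy (n : ℕ) : ℝ := ∫ θ in (0:ℝ)..1, fallFac θ n

/-- Signed Stirling numbers of the first kind. -/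
noncomputable def stirlingFst (n k : ℕ) : ℝ := (descPochhammer ℝ n).coeff k

/-- Stirling numbers of the second kind. -/
def stirlingSnd : ℕ → ℕ → ℕ
  | 0, 0 => 1
  | 0, _ + 1 => 0
  | _ + 1, 0 => 0
  | n + 1, k + 1 => (k + 1) * stirlingSnd n (k + 1) + stirlingSnd n k


/-!
Integrating Vandermonde's identity `(x + y)_n = ∑ C(n,k) (x)_k (y)_(n-k)` over the unit square
turns the left-hand side into `∫∫ (x + y)_n`. Expanding instead `(x + y)_n = ∑ s(n,k) (x + y)^k`
reduces everything to `∫∫ (x + y)^k = (2^(k+2) - 2) / ((k+1)(k+2)) = S(k+2,2) / C(k+2,2)`.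
-/

lemma fallFac_eq_eval (θ : ℝ) (n : ℕ) : fallFac θ n = (descPochhammer ℝ n).eval θ :=
  (descPochhammer_eval_eq_prod_range n θ).symm

lemma fallFac_eq_smeval (θ : ℝ) (n : ℕ) : fallFac θ n = (descPochhammer ℤ n).smeval θ := by
  rw [← Polynomial.aeval_eq_smeval, Polynomial.aeval_def, Polynomial.eval₂_eq_eval_map,
    descPochhammer_map, fallFac_eq_eval]

lemma fallFac_add (x y : ℝ) (n : ℕ) :
    fallFac (x + y) n =
      ∑ k ∈ range (n + 1), (n.choose k : ℝ) * fallFac x k * fallFac y (n - k) := by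
  simp only [fallFac_eq_smeval, Ring.descPochhammer_smeval_add n (Commute.all x y),
    Nat.sum_antidiagonal_eq_sum_range_succ_mk, mul_assoc]

lemma fallFac_eq_sum_stirlingFst (θ : ℝ) (n : ℕ) :
    fallFac θ n = ∑ k ∈ range (n + 1), stirlingFst n k * θ ^ k := by
  rw [fallFac_eq_eval,
    Polynomial.eval_eq_sum_range' (n := n + 1) (by simp [descPochhammer_natDegree])]
  rfl

@[fun_prop]
lemma continuous_fallFac (n : ℕ) : Continuous (fun θ : ℝ => fallFac θ n) := by
  unfold fallFac
  fun_prop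

lemma integral_integral_finsetSum {ι E : Type*} [NormedAddCommGroup E] [NormedSpace ℝ E]
    (s : Finset ι) (f : ι → ℝ → ℝ → E) (hf : ∀ i ∈ s, Continuous (Function.uncurry (f i)))
    (a b c d : ℝ) :
    ∫ y in c..d, ∫ x in a..b, ∑ i ∈ s, f i y x = ∑ i ∈ s, ∫ y in c..d, ∫ x in a..b, f i y x := by
  have inner (y : ℝ) : ∫ x in a..b, ∑ i ∈ s, f i y x = ∑ i ∈ s, ∫ x in a..b, f i y x :=
    intervalIntegral.integral_finsetSum fun i hi =>
      ((hf i hi).uncurry_left y).intervalIntegrable a b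
  simp_rw [inner]
  exact intervalIntegral.integral_finsetSum fun i hi =>
    (intervalIntegral.continuous_parametric_intervalIntegral_of_continuous' (hf i hi) a b
      ).intervalIntegrable c d

lemma integral_fallFac_add (y : ℝ) (n : ℕ) :
    ∫ x in (0 : ℝ)..1, fallFac (x + y) n =
      ∑ k ∈ range (n + 1), (n.choose k : ℝ) * cauchy k * fallFac y (n - k) := by
  simp_rw [fallFac_add]
  rw [intervalIntegral.integral_finsetSum fun k _ =>
    Continuous.intervalIntegrable (by fun_prop) _ _]
  refine sum_congr rfl fun k _ => ?_
  rw [intervalIntegral.integral_mul_const, intervalIntegral.integral_const_mul, cauchy]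

lemma integral_integral_fallFac_add (n : ℕ) :
    ∫ y in (0 : ℝ)..1, ∫ x in (0 : ℝ)..1, fallFac (x + y) n =
      ∑ k ∈ range (n + 1), (n.choose k : ℝ) * cauchy k * cauchy (n - k) := by
  simp_rw [integral_fallFac_add]
  rw [intervalIntegral.integral_finsetSum fun k _ =>
    Continuous.intervalIntegrable (by fun_prop) _ _]
  simp_rw [intervalIntegral.integral_const_mul, cauchy]

lemma integral_add_pow (y : ℝ) (k : ℕ) :
    ∫ x in (0 : ℝ)..1, (x + y) ^ k = ((1 + y) ^ (k + 1) - y ^ (k + 1)) / (k + 1) := by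
  rw [intervalIntegral.integral_comp_add_right (· ^ k), integral_pow, zero_add, add_comm]

lemma integral_integral_add_pow (k : ℕ) :
    ∫ y in (0 : ℝ)..1, ∫ x in (0 : ℝ)..1, (x + y) ^ k =
      (2 ^ (k + 1) - 1) / ((k + 2).choose 2 : ℝ) := by
  simp_rw [integral_add_pow]
  rw [intervalIntegral.integral_div, intervalIntegral.integral_sub
    (f := fun y => (1 + y) ^ (k + 1)) (Continuous.intervalIntegrable (by fun_prop) _ _)
    (Continuous.intervalIntegrable (by fun_prop) _ _),
    intervalIntegral.integral_comp_add_left (· ^ (k + 1)), integral_pow, integral_pow,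
    Nat.cast_choose_two]
  push_cast
  rw [show (k : ℝ) + 2 - 1 = k + 1 by ring]
  norm_num
  field_simp
  ring

lemma stirlingSnd_one (n : ℕ) : stirlingSnd (n + 1) 1 = 1 := by
  induction n with
  | zero => rfl
  | succ n ih => rw [stirlingSnd, ih]; rfl

lemma stirlingSnd_two (k : ℕ) : (stirlingSnd (k + 2) 2 : ℝ) = 2 ^ (k + 1) - 1 := by
  induction k with
  | zero => norm_num [stirlingSnd]
  | succ k ih =>
    rw [stirlingSnd, Nat.cast_add, Nat.cast_mul, ih, stirlingSnd_one]
    push_cast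
    ring

theorem cauchy_self_convolution_stirling (n : ℕ) :
    ∑ k ∈ Finset.range (n + 1), (n.choose k : ℝ) * cauchy k * cauchy (n - k) =
      ∑ k ∈ Finset.range (n + 1),
        stirlingFst n k * (stirlingSnd (k + 2) 2 : ℝ) / ((k + 2).choose 2 : ℝ) := by
  calc ∑ k ∈ range (n + 1), (n.choose k : ℝ) * cauchy k * cauchy (n - k)
      = ∫ y in (0 : ℝ)..1, ∫ x in (0 : ℝ)..1,
          ∑ k ∈ range (n + 1), stirlingFst n k * (x + y) ^ k := by
        simp_rw [← fallFac_eq_sum_stirlingFst, integral_integral_fallFac_add]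
    _ = ∑ k ∈ range (n + 1),
          stirlingFst n k * ∫ y in (0 : ℝ)..1, ∫ x in (0 : ℝ)..1, (x + y) ^ k := by
        rw [integral_integral_finsetSum _ _ fun k _ => by fun_prop]
        simp_rw [intervalIntegral.integral_const_mul]
    _ = _ := by simp_rw [integral_integral_add_pow, stirlingSnd_two, mul_div_assoc]
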